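/- (AdaHedge variance regret bound) For losses in [0,1]^K, AdaHedge's regret satisfies R_T ≤ 2·√(V_T·ln K) + (4/3)·ln K + 2, where V_T is the cumulative loss variance under AdaHedge's weights. -/

import Mathlib

open Finset

noncomputable section

/-- Cumulative losses: `L t k = ∑_{s < t} ℓ s k` (so `L 0 = 0`). -/
def cumLoss {K : ℕ} (ℓ : ℕ → Fin K → ℝ) (t : ℕ) (k : Fin K) : ℝ :=
  ∑ s ∈ Finset.range t, ℓ s k

/-- `L* = min_k L k`. -/
def bestLoss {K : ℕ} [NeZero K] (L : Fin K → ℝ) : ℝ :=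
  Finset.univ.inf' ⟨⟨0, Nat.pos_of_ne_zero (NeZero.ne K)⟩, Finset.mem_univ _⟩ L

/-- The set of current leaders. -/
def leaders {K : ℕ} [NeZero K] (L : Fin K → ℝ) : Finset (Fin K) :=
  Finset.univ.filter fun k => L k = bestLoss L

/-- Hedge weights at round `t` (rounds indexed `0,…,T-1`), given the cumulative mixability
gap `D = Δ_{t-1}` accrued so far, i.e. with learning rate `η_t = ln K / D`; the case
`D = 0` corresponds to `η_t = ∞`, giving uniform weights on the current leaders (FTL). -/
def wts {K : ℕ} [NeZero K] (ℓ : ℕ → Fin K → ℝ) (t : ℕ) (D : ℝ) (k : Fin K) : ℝ :=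
  if D = 0 then
    (if k ∈ leaders (cumLoss ℓ t) then ((leaders (cumLoss ℓ t)).card : ℝ)⁻¹ else 0)
  else
    Real.exp (-(Real.log K / D) * cumLoss ℓ t k) /
      ∑ j, Real.exp (-(Real.log K / D) * cumLoss ℓ t j)

/-- Hedge loss `h_t = w_t · ℓ_t`. -/
def hloss {K : ℕ} [NeZero K] (ℓ : ℕ → Fin K → ℝ) (t : ℕ) (D : ℝ) : ℝ :=
  ∑ k, wts ℓ t D k * ℓ t k

/-- Cumulative mix loss of Hedge with constant rate `η` and uniform prior. -/
def Mconst {K : ℕ} (ℓ : ℕ → Fin K → ℝ) (η : ℝ) (t : ℕ) : ℝ :=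
  -(1/η) * Real.log ((1 / (K : ℝ)) * ∑ k, Real.exp (-η * cumLoss ℓ t k))

/-- Per-round mix loss `m_t = -(1/η_t)·ln(∑ₖ w_{t,k} e^{-η_t ℓ_{t,k}})` at rate
`η_t = ln K / D`, written in telescoped form; for `D = 0` (i.e. `η_t = ∞`) it equals
`L*_t - L*_{t-1}`. -/
def mloss {K : ℕ} [NeZero K] (ℓ : ℕ → Fin K → ℝ) (t : ℕ) (D : ℝ) : ℝ :=
  if D = 0 then bestLoss (cumLoss ℓ (t+1)) - bestLoss (cumLoss ℓ t)
  else Mconst ℓ (Real.log K / D) (t+1) - Mconst ℓ (Real.log K / D) t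

/-- Mixability gap `δ_t = h_t - m_t`. -/
def mixGap {K : ℕ} [NeZero K] (ℓ : ℕ → Fin K → ℝ) (t : ℕ) (D : ℝ) : ℝ :=
  hloss ℓ t D - mloss ℓ t D

/-- AdaHedge's cumulative mixability gap `Δ_t`, defined recursively: `Δ_0 = 0` and
`Δ_{t+1} = Δ_t + δ_{t+1}`, where round `t+1` uses learning rate `η = ln K / Δ_t`
(interpreted as `∞` when `Δ_t = 0`). -/
def ahDelta {K : ℕ} [NeZero K] (ℓ : ℕ → Fin K → ℝ) : ℕ → ℝ
  | 0 => 0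
  | (t+1) => ahDelta ℓ t + mixGap ℓ t (ahDelta ℓ t)

/-- Loss variance `v_t = ∑ₖ w_{t,k}(ℓ_{t,k} - h_t)²`. -/
def vvar {K : ℕ} [NeZero K] (ℓ : ℕ → Fin K → ℝ) (t : ℕ) (D : ℝ) : ℝ :=
  ∑ k, wts ℓ t D k * (ℓ t k - hloss ℓ t D)^2


section Basics
open Finset
variable {K : ℕ} [NeZero K] (ℓ : ℕ → Fin K → ℝ)

lemma finK_nonempty : Nonempty (Fin K) := ⟨⟨0, Nat.pos_of_ne_zero (NeZero.ne K)⟩⟩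

lemma bestLoss_le (L : Fin K → ℝ) (k : Fin K) : bestLoss L ≤ L k :=
  Finset.inf'_le _ (Finset.mem_univ k)

lemma exists_best (L : Fin K → ℝ) : ∃ k, L k = bestLoss L := by
  obtain ⟨k, _, hk⟩ := Finset.exists_mem_eq_inf' (s := (Finset.univ : Finset (Fin K)))
    ⟨⟨0, Nat.pos_of_ne_zero (NeZero.ne K)⟩, Finset.mem_univ _⟩ L
  exact ⟨k, hk.symm⟩

lemma mem_leaders_iff (L : Fin K → ℝ) (k : Fin K) :
    k ∈ leaders L ↔ L k = bestLoss L := by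
  simp [leaders]

lemma leaders_nonempty (L : Fin K → ℝ) : (leaders L).Nonempty := by
  obtain ⟨k, hk⟩ := exists_best L
  exact ⟨k, (mem_leaders_iff L k).2 hk⟩

lemma cumLoss_succ (t : ℕ) (k : Fin K) :
    cumLoss ℓ (t + 1) k = cumLoss ℓ t k + ℓ t k := Finset.sum_range_succ _ _

lemma cumLoss_zero (k : Fin K) : cumLoss ℓ 0 k = 0 := Finset.sum_range_zero _

lemma bestLoss_cumLoss_zero : bestLoss (cumLoss ℓ 0) = 0 := by
  have : cumLoss ℓ 0 = fun _ => (0 : ℝ) := funext fun k => cumLoss_zero ℓ k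
  rw [bestLoss, this]
  exact Finset.inf'_const _ _

lemma wts_nonneg (t : ℕ) (D : ℝ) (k : Fin K) : 0 ≤ wts ℓ t D k := by
  unfold wts
  split_ifs with h h2
  · positivity
  · exact le_rfl
  · positivity

lemma zpos (t : ℕ) (η : ℝ) : 0 < ∑ j, Real.exp (-η * cumLoss ℓ t j) := by
  haveI := finK_nonempty (K := K)
  exact Finset.sum_pos (fun j _ => Real.exp_pos _) Finset.univ_nonempty

lemma wts_pos (t : ℕ) {D : ℝ} (hD : D ≠ 0) (k : Fin K) : 0 < wts ℓ t D k := by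
  rw [wts, if_neg hD]
  exact div_pos (Real.exp_pos _) (zpos ℓ t _)

lemma wts_sum (t : ℕ) (D : ℝ) : ∑ k, wts ℓ t D k = 1 := by
  unfold wts
  split_ifs with h
  · rw [Finset.sum_ite_mem, Finset.univ_inter, Finset.sum_const, nsmul_eq_mul,
      mul_inv_cancel₀]
    exact_mod_cast Finset.card_ne_zero_of_mem (leaders_nonempty (cumLoss ℓ t)).choose_spec
  · rw [← Finset.sum_div, div_self (zpos ℓ t _).ne']

lemma hloss_nonneg (t : ℕ) (D : ℝ) (hℓ0 : ∀ k, 0 ≤ ℓ t k) : 0 ≤ hloss ℓ t D :=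
  Finset.sum_nonneg fun k _ => mul_nonneg (wts_nonneg ℓ t D k) (hℓ0 k)

lemma hloss_le_one (t : ℕ) (D : ℝ) (hℓ1 : ∀ k, ℓ t k ≤ 1) : hloss ℓ t D ≤ 1 := by
  calc hloss ℓ t D ≤ ∑ k, wts ℓ t D k := Finset.sum_le_sum fun k _ =>
        mul_le_of_le_one_right (wts_nonneg ℓ t D k) (hℓ1 k)
    _ = 1 := wts_sum ℓ t D

lemma vvar_nonneg (t : ℕ) (D : ℝ) : 0 ≤ vvar ℓ t D :=
  Finset.sum_nonneg fun k _ => mul_nonneg (wts_nonneg ℓ t D k) (sq_nonneg _)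

end Basics
lemma wts_sum' {K : ℕ} [NeZero K] (ℓ : ℕ → Fin K → ℝ) {t : ℕ} {D : ℝ} : ∑ k, wts ℓ t D k = 1 := wts_sum ℓ t D
section Mix
open Finset
variable {K : ℕ} [NeZero K] (ℓ : ℕ → Fin K → ℝ)

/-- Per-round mix loss formula for `D ≠ 0`. -/
lemma mloss_eq (t : ℕ) {D : ℝ} (hD : D ≠ 0) :
    mloss ℓ t D = -(1 / (Real.log K / D)) *
      Real.log (∑ k, wts ℓ t D k * Real.exp (-(Real.log K / D) * ℓ t k)) := by
  set η := Real.log K / D with hη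
  have hZ : ∀ s, (0:ℝ) < ∑ j, Real.exp (-η * cumLoss ℓ s j) := fun s => zpos ℓ s η
  have hKpos : (0:ℝ) < (K:ℝ) := by
    exact_mod_cast Nat.pos_of_ne_zero (NeZero.ne K)
  have hsum : ∑ k, wts ℓ t D k * Real.exp (-η * ℓ t k) =
      (∑ k, Real.exp (-η * cumLoss ℓ (t+1) k)) / (∑ j, Real.exp (-η * cumLoss ℓ t j)) := by
    rw [Finset.sum_div]
    refine Finset.sum_congr rfl fun k _ => ?_
    rw [wts, if_neg hD, div_mul_eq_mul_div, ← Real.exp_add, cumLoss_succ,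
      show -η * cumLoss ℓ t k + -η * ℓ t k = -η * (cumLoss ℓ t k + ℓ t k) by ring]
  rw [mloss, if_neg hD, hsum, Mconst, Mconst]
  rw [Real.log_div (hZ (t+1)).ne' (hZ t).ne',
    Real.log_mul (by positivity) (hZ (t+1)).ne',
    Real.log_mul (by positivity) (hZ t).ne']
  ring

/-- Mix loss is at most the Hedge loss (Jensen), for positive learning rate. -/
lemma mloss_le_hloss (t : ℕ) {D : ℝ} (hD : D ≠ 0) (hη : 0 < Real.log K / D) :
    mloss ℓ t D ≤ hloss ℓ t D := by
  haveI := finK_nonempty (K := K)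
  set η := Real.log K / D with hη'
  set w := wts ℓ t D with hw
  have hS : (0:ℝ) < ∑ k, w k * Real.exp (-η * ℓ t k) :=
    Finset.sum_pos (fun k _ => mul_pos (wts_pos ℓ t hD k) (Real.exp_pos _))
      Finset.univ_nonempty
  have jensen : Real.exp (∑ k, w k • (-η * ℓ t k)) ≤ ∑ k, w k • Real.exp (-η * ℓ t k) :=
    convexOn_exp.map_sum_le (fun k _ => wts_nonneg ℓ t D k) (wts_sum ℓ t D)
      (fun k _ => Set.mem_univ _)
  simp only [smul_eq_mul] at jensen
  have hexp : ∑ k, w k * (-η * ℓ t k) = -η * hloss ℓ t D := by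
    rw [hloss, Finset.mul_sum]
    exact Finset.sum_congr rfl fun k _ => by ring
  rw [hexp] at jensen
  have hlog : -η * hloss ℓ t D ≤ Real.log (∑ k, w k * Real.exp (-η * ℓ t k)) :=
    (Real.le_log_iff_exp_le hS).2 jensen
  rw [mloss_eq ℓ t hD, ← hη', ← hw]
  have h1η : 0 < 1/η := by positivity
  have h2 := mul_le_mul_of_nonneg_left hlog (le_of_lt h1η)
  have h3 : (1/η) * (-η * hloss ℓ t D) = -hloss ℓ t D := by
    field_simp
  linarith

/-- Mix loss is nonnegative for positive rate and nonnegative losses. -/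
lemma mloss_nonneg (t : ℕ) {D : ℝ} (hD : D ≠ 0) (hη : 0 < Real.log K / D)
    (hℓ0 : ∀ k, 0 ≤ ℓ t k) : 0 ≤ mloss ℓ t D := by
  haveI := finK_nonempty (K := K)
  set η := Real.log K / D with hη'
  set w := wts ℓ t D with hw
  have hS : (0:ℝ) < ∑ k, w k * Real.exp (-η * ℓ t k) :=
    Finset.sum_pos (fun k _ => mul_pos (wts_pos ℓ t hD k) (Real.exp_pos _))
      Finset.univ_nonempty
  have hS1 : ∑ k, w k * Real.exp (-η * ℓ t k) ≤ 1 := by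
    rw [← wts_sum ℓ t D, ← hw]
    refine Finset.sum_le_sum fun k _ => ?_
    have h1 : Real.exp (-η * ℓ t k) ≤ 1 := by
      rw [Real.exp_le_one_iff]
      have := hℓ0 k
      nlinarith
    exact mul_le_of_le_one_right (wts_nonneg ℓ t D k) h1
  have hlog : Real.log (∑ k, w k * Real.exp (-η * ℓ t k)) ≤ 0 := Real.log_nonpos hS.le hS1
  rw [mloss_eq ℓ t hD, ← hη', ← hw]
  nlinarith [le_of_lt (show (0:ℝ) < 1/η by positivity)]

lemma hloss_zero_eq (t : ℕ) :
    hloss ℓ t 0 = ((leaders (cumLoss ℓ t)).card : ℝ)⁻¹ * ∑ k ∈ leaders (cumLoss ℓ t), ℓ t k := by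
  rw [hloss]
  simp only [wts, eq_self_iff_true, if_true, ite_mul, zero_mul]
  rw [Finset.sum_ite_mem, Finset.univ_inter, Finset.mul_sum]

/-- FTL (`D = 0`) mix loss is at most the Hedge loss. -/
lemma mloss_le_hloss_zero (t : ℕ) : mloss ℓ t 0 ≤ hloss ℓ t 0 := by
  set S := leaders (cumLoss ℓ t) with hSdef
  have hSne : S.Nonempty := leaders_nonempty _
  have hcard : (0:ℝ) < (S.card : ℝ) := by exact_mod_cast Finset.card_pos.2 hSne
  have key : ∀ k ∈ S, bestLoss (cumLoss ℓ (t+1)) ≤ bestLoss (cumLoss ℓ t) + ℓ t k := by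
    intro k hk
    have h1 := bestLoss_le (cumLoss ℓ (t+1)) k
    rw [cumLoss_succ ℓ t k] at h1
    have h2 : cumLoss ℓ t k = bestLoss (cumLoss ℓ t) := (mem_leaders_iff _ k).1 hk
    linarith
  have hsum := Finset.sum_le_sum key
  rw [Finset.sum_const, Finset.sum_add_distrib, Finset.sum_const, nsmul_eq_mul,
    nsmul_eq_mul] at hsum
  have h5 : (S.card:ℝ) * (bestLoss (cumLoss ℓ (t+1)) - bestLoss (cumLoss ℓ t))
      ≤ ∑ k ∈ S, ℓ t k := by linarith
  rw [mloss, if_pos rfl, hloss_zero_eq, ← hSdef]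
  have h6 : bestLoss (cumLoss ℓ (t+1)) - bestLoss (cumLoss ℓ t) =
      ((S.card:ℝ))⁻¹ * ((S.card:ℝ) * (bestLoss (cumLoss ℓ (t+1)) - bestLoss (cumLoss ℓ t))) := by
    field_simp
  linarith [mul_le_mul_of_nonneg_left h5 (inv_nonneg.2 hcard.le), h6.le, h6.ge]

/-- FTL mix loss is nonnegative for nonnegative losses. -/
lemma mloss_nonneg_zero (t : ℕ) (hℓ0 : ∀ k, 0 ≤ ℓ t k) : 0 ≤ mloss ℓ t 0 := by
  rw [mloss, if_pos rfl, sub_nonneg]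
  obtain ⟨k, hk⟩ := exists_best (cumLoss ℓ (t+1))
  calc bestLoss (cumLoss ℓ t) ≤ cumLoss ℓ t k := bestLoss_le _ k
    _ ≤ cumLoss ℓ (t+1) k := by rw [cumLoss_succ]; linarith [hℓ0 k]
    _ = bestLoss (cumLoss ℓ (t+1)) := hk

end Mix
section MC
open Finset
variable {K : ℕ} [NeZero K] (ℓ : ℕ → Fin K → ℝ)

lemma Kpos : (0:ℝ) < (K:ℝ) := by exact_mod_cast Nat.pos_of_ne_zero (NeZero.ne K)

lemma Mconst_zero (η : ℝ) : Mconst ℓ η 0 = 0 := by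
  have : ∀ k : Fin K, Real.exp (-η * cumLoss ℓ 0 k) = 1 := fun k => by
    rw [cumLoss_zero]; simp
  rw [Mconst]
  rw [Finset.sum_congr rfl fun k _ => this k, Finset.sum_const, Finset.card_univ,
    Fintype.card_fin, nsmul_eq_mul, mul_one]
  rw [one_div_mul_cancel (Kpos (K := K)).ne', Real.log_one, mul_zero]

lemma Mconst_ge_best (t : ℕ) {η : ℝ} (hη : 0 < η) :
    bestLoss (cumLoss ℓ t) ≤ Mconst ℓ η t := by
  haveI := finK_nonempty (K := K)
  set B := bestLoss (cumLoss ℓ t) with hB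
  have hub : ∑ k, Real.exp (-η * cumLoss ℓ t k) ≤ (K:ℝ) * Real.exp (-η * B) := by
    calc ∑ k, Real.exp (-η * cumLoss ℓ t k) ≤ ∑ _k : Fin K, Real.exp (-η * B) := by
          refine Finset.sum_le_sum fun k _ => Real.exp_le_exp.2 ?_
          have := bestLoss_le (cumLoss ℓ t) k
          nlinarith
      _ = (K:ℝ) * Real.exp (-η * B) := by
          rw [Finset.sum_const, Finset.card_univ, Fintype.card_fin, nsmul_eq_mul]
  have hZ := zpos ℓ t η
  have hKpos := Kpos (K := K)
  have hlog : Real.log ((1/(K:ℝ)) * ∑ k, Real.exp (-η * cumLoss ℓ t k)) ≤ -η * B := by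
    have h1 : (1/(K:ℝ)) * ∑ k, Real.exp (-η * cumLoss ℓ t k) ≤ Real.exp (-η * B) := by
      rw [div_mul_eq_mul_div, one_mul, div_le_iff₀ hKpos]
      linarith [hub]
    calc Real.log ((1/(K:ℝ)) * ∑ k, Real.exp (-η * cumLoss ℓ t k))
        ≤ Real.log (Real.exp (-η * B)) := Real.log_le_log (by positivity) h1
      _ = -η * B := Real.log_exp _
  rw [Mconst]
  have h2 := mul_le_mul_of_nonneg_left hlog (le_of_lt (show (0:ℝ) < 1/η by positivity))
  have h3 : (1/η) * (-η * B) = -B := by field_simp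
  linarith [h2, h3]

lemma Mconst_le_best_add (t : ℕ) {η : ℝ} (hη : 0 < η) :
    Mconst ℓ η t ≤ bestLoss (cumLoss ℓ t) + Real.log K / η := by
  haveI := finK_nonempty (K := K)
  set B := bestLoss (cumLoss ℓ t) with hB
  obtain ⟨k0, hk0⟩ := exists_best (cumLoss ℓ t)
  have hlb : Real.exp (-η * B) ≤ ∑ k, Real.exp (-η * cumLoss ℓ t k) := by
    rw [hB, ← hk0]
    exact Finset.single_le_sum (f := fun k => Real.exp (-η * cumLoss ℓ t k))
      (fun k _ => (Real.exp_pos _).le) (Finset.mem_univ k0)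
  have hKpos := Kpos (K := K)
  have hlog : Real.log (1/(K:ℝ)) + (-η * B) ≤
      Real.log ((1/(K:ℝ)) * ∑ k, Real.exp (-η * cumLoss ℓ t k)) := by
    rw [← Real.log_exp (-η * B), ← Real.log_mul (by positivity) (Real.exp_pos _).ne']
    exact Real.log_le_log (by positivity)
      (mul_le_mul_of_nonneg_left hlb (by positivity))
  rw [Mconst]
  rw [Real.log_div one_ne_zero hKpos.ne', Real.log_one] at hlog
  have h2 := mul_le_mul_of_nonneg_left hlog (le_of_lt (show (0:ℝ) < 1/η by positivity))
  have h3 : (1/η) * (0 - Real.log K + -η * B) = -B + (1/η) * (- Real.log K) := by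
    field_simp
    ring
  have h4 : Real.log K / η = (1/η) * Real.log K := by ring
  nlinarith [h2, h3]

/-- The cumulative mix loss is nonincreasing in `η`. -/
lemma Mconst_mono (t : ℕ) {η₁ η₂ : ℝ} (h2 : 0 < η₂) (h12 : η₂ ≤ η₁) :
    Mconst ℓ η₁ t ≤ Mconst ℓ η₂ t := by
  haveI := finK_nonempty (K := K)
  have h1 : 0 < η₁ := lt_of_lt_of_le h2 h12
  have hKpos := Kpos (K := K)
  set p := η₁ / η₂ with hp
  have hp1 : 1 ≤ p := (one_le_div h2).2 h12
  set z := fun k => Real.exp (-η₂ * cumLoss ℓ t k) with hz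
  have hw1 : ∑ _k : Fin K, (1/(K:ℝ)) = 1 := by
    rw [Finset.sum_const, Finset.card_univ, Fintype.card_fin, nsmul_eq_mul]
    field_simp
  have hpm := Real.rpow_arith_mean_le_arith_mean_rpow Finset.univ (fun _ => (1/(K:ℝ))) z
    (fun _ _ => by positivity) hw1 (fun k _ => (Real.exp_pos _).le) hp1
  have hpp : η₂ * p = η₁ := by rw [hp]; field_simp
  have hzp : ∀ k, z k ^ p = Real.exp (-η₁ * cumLoss ℓ t k) := by
    intro k
    show Real.exp (-η₂ * cumLoss ℓ t k) ^ p = _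
    rw [← Real.exp_mul]
    congr 1
    calc -η₂ * cumLoss ℓ t k * p = -(η₂ * p) * cumLoss ℓ t k := by ring
      _ = -η₁ * cumLoss ℓ t k := by rw [hpp]
  have hpm' : (∑ k, (1/(K:ℝ)) * z k) ^ p ≤ ∑ k, (1/(K:ℝ)) * Real.exp (-η₁ * cumLoss ℓ t k) :=
    hpm.trans_eq (Finset.sum_congr rfl fun k _ => by rw [← hzp k])
  clear hpm
  have hA2 : (0:ℝ) < ∑ k, (1/(K:ℝ)) * z k := by
    refine Finset.sum_pos (fun k _ => ?_) Finset.univ_nonempty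
    exact mul_pos (by positivity) (Real.exp_pos _)
  have hA1 : (0:ℝ) < ∑ k, (1/(K:ℝ)) * Real.exp (-η₁ * cumLoss ℓ t k) := by
    refine Finset.sum_pos (fun k _ => ?_) Finset.univ_nonempty
    exact mul_pos (by positivity) (Real.exp_pos _)
  have hlog : p * Real.log (∑ k, (1/(K:ℝ)) * z k)
      ≤ Real.log (∑ k, (1/(K:ℝ)) * Real.exp (-η₁ * cumLoss ℓ t k)) := by
    rw [← Real.log_rpow hA2]
    exact Real.log_le_log (Real.rpow_pos_of_pos hA2 p) hpm'
  have e1 : Mconst ℓ η₁ t = -(1/η₁) * Real.log (∑ k, (1/(K:ℝ)) * Real.exp (-η₁ * cumLoss ℓ t k)) := by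
    rw [Mconst, Finset.mul_sum]
  have e2 : Mconst ℓ η₂ t = -(1/η₂) * Real.log (∑ k, (1/(K:ℝ)) * z k) := by
    rw [Mconst, Finset.mul_sum]
  rw [e1, e2]
  have h5 := mul_le_mul_of_nonneg_left hlog (le_of_lt (show (0:ℝ) < 1/η₁ by positivity))
  have h6 : (1/η₁) * (p * Real.log (∑ k, (1/(K:ℝ)) * z k))
      = (1/η₂) * Real.log (∑ k, (1/(K:ℝ)) * z k) := by
    rw [hp]
    field_simp
  linarith [h5, h6]

end MC

/-- If `f 0 = 0` and `f' ≥ 0` on `[0,∞)`, then `f ≥ 0` on `[0,∞)`. -/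
lemma nonneg_of_deriv (f f' : ℝ → ℝ) (hf : ∀ x, HasDerivAt f (f' x) x)
    (h0 : f 0 = 0) (hf' : ∀ x, 0 ≤ x → 0 ≤ f' x) {x : ℝ} (hx : 0 ≤ x) : 0 ≤ f x := by
  have mono : MonotoneOn f (Set.Ici 0) :=
    monotoneOn_of_deriv_nonneg (convex_Ici 0)
      (fun y _ => (hf y).continuousAt.continuousWithinAt)
      (fun y _ => (hf y).differentiableAt.differentiableWithinAt)
      (fun y hy => by
        rw [(hf y).deriv]
        exact hf' y (le_of_lt (by simpa [interior_Ici] using hy)))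
  have h := mono Set.self_mem_Ici hx hx
  rw [h0] at h; exact h

lemma aux_g' (x : ℝ) (hx : 0 ≤ x) : 0 ≤ (x - 1) * Real.exp x + 1 := by
  rcases le_or_gt 1 x with h | h
  · nlinarith [Real.exp_pos x]
  · have h1 := Real.add_one_le_exp (-x)
    have h2 : (-x + 1) * Real.exp x ≤ 1 := by
      have := mul_le_mul_of_nonneg_right h1 (Real.exp_pos x).le
      rwa [← Real.exp_add, neg_add_cancel, Real.exp_zero] at this
    nlinarith

lemma aux_g (x : ℝ) (hx : 0 ≤ x) : 0 ≤ (x - 2) * Real.exp x + x + 2 := by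
  refine nonneg_of_deriv (fun x => (x - 2) * Real.exp x + x + 2)
    (fun x => ((x - 1) * Real.exp x + 1)) (fun y => ?_) (by simp) (fun y hy => aux_g' y hy) hx
  have h1 : HasDerivAt (fun x : ℝ => (x - 2) * Real.exp x) (1 * Real.exp y + (y - 2) * Real.exp y) y :=
    ((hasDerivAt_id y).sub_const 2).mul (Real.hasDerivAt_exp y)
  have h3 := (h1.add (hasDerivAt_id y)).add_const 2
  exact h3.congr_deriv (by beta_reduce; ring)

lemma aux_f (x : ℝ) (hx : 0 ≤ x) : (Real.exp x - x - 1) * (6 - 2 * x) ≤ 3 * x ^ 2 := by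
  have key : 0 ≤ 3 * x ^ 2 - (Real.exp x - x - 1) * (6 - 2 * x) := by
    refine nonneg_of_deriv (fun x => 3 * x ^ 2 - (Real.exp x - x - 1) * (6 - 2 * x))
      (fun x => 2 * ((x - 2) * Real.exp x + x + 2)) (fun y => ?_) (by simp)
      (fun y hy => by
        have := aux_g y hy
        show (0:ℝ) ≤ 2 * ((y - 2) * Real.exp y + y + 2)
        linarith) hx
    have h1 : HasDerivAt (fun x : ℝ => Real.exp x - x - 1) (Real.exp y - 1) y := by
      exact (((Real.hasDerivAt_exp y).sub (hasDerivAt_id y)).sub_const 1).congr_deriv (by ring)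
    have h2 : HasDerivAt (fun x : ℝ => 6 - 2 * x) (0 - 2 * 1) y :=
      (hasDerivAt_const y 6).sub ((hasDerivAt_id y).const_mul 2)
    have h3 : HasDerivAt (fun x : ℝ => 3 * x ^ 2) (3 * (2 * y ^ 1)) y :=
      (hasDerivAt_pow 2 y).const_mul 3
    have h4 := h3.sub (h1.mul h2)
    exact h4.congr_deriv (by beta_reduce; ring)
  linarith

lemma exp_quad_neg (y : ℝ) (hy : y ≤ 0) : Real.exp y ≤ 1 + y + y ^ 2 / 2 := by
  have key : 0 ≤ 1 - (-y) + (-y) ^ 2 / 2 - Real.exp (-(-y)) := by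
    refine nonneg_of_deriv (fun x => 1 - x + x ^ 2 / 2 - Real.exp (-x))
      (fun x => -1 + x + Real.exp (-x)) (fun z => ?_) (by simp)
      (fun z hz => by
        have := Real.add_one_le_exp (-z)
        show (0:ℝ) ≤ -1 + z + Real.exp (-z)
        linarith) (by linarith)
    have h1 : HasDerivAt (fun x : ℝ => Real.exp (-x)) (Real.exp (-z) * (-1)) z :=
      (Real.hasDerivAt_exp (-z)).comp z ((hasDerivAt_id z).neg)
    have h2 : HasDerivAt (fun x : ℝ => 1 - x + x ^ 2 / 2) (0 - 1 + 2 * z ^ 1 / 2) z :=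
      (((hasDerivAt_const z 1).sub (hasDerivAt_id z)).add ((hasDerivAt_pow 2 z).div_const 2))
    have h4 := h2.sub h1
    exact h4.congr_deriv (by beta_reduce; ring)
  simp only [neg_neg] at key
  linarith

lemma exp_le_quad {η y : ℝ} (hη0 : 0 ≤ η) (hη3 : η < 3) (hy : y ≤ η) :
    Real.exp y ≤ 1 + y + y ^ 2 / (2 - 2 * η / 3) := by
  have hd : 0 < 2 - 2 * η / 3 := by linarith
  rcases le_or_gt y 0 with h | h
  · have h1 := exp_quad_neg y h
    have h2 : y ^ 2 / 2 ≤ y ^ 2 / (2 - 2 * η / 3) :=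
      div_le_div_of_nonneg_left (sq_nonneg y) hd (by linarith)
    linarith
  · have h1 := aux_f y h.le
    have h2 : 0 ≤ Real.exp y - y - 1 := by nlinarith [Real.add_one_le_exp y]
    have h3 : (Real.exp y - y - 1) * (2 - 2 * η / 3) ≤ y ^ 2 := by nlinarith
    have h4 : Real.exp y - y - 1 ≤ y ^ 2 / (2 - 2 * η / 3) := (le_div_iff₀ hd).2 h3
    linarith
section Gap
open Finset
variable {K : ℕ} [NeZero K] (ℓ : ℕ → Fin K → ℝ)

lemma logK_pos (hK2 : 2 ≤ K) : 0 < Real.log K :=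
  Real.log_pos (by exact_mod_cast hK2.trans_lt' one_lt_two)

lemma mixGap_nonneg (hK2 : 2 ≤ K) (t : ℕ) {D : ℝ} (hD : 0 ≤ D) :
    0 ≤ mixGap ℓ t D := by
  rcases eq_or_lt_of_le hD with rfl | h
  · rw [mixGap, sub_nonneg]
    exact mloss_le_hloss_zero ℓ t
  · rw [mixGap, sub_nonneg]
    exact mloss_le_hloss ℓ t h.ne' (div_pos (logK_pos hK2) h)

lemma mixGap_le_one (hK2 : 2 ≤ K) (t : ℕ) {D : ℝ} (hD : 0 ≤ D)
    (hℓ : ∀ t k, ℓ t k ∈ Set.Icc (0:ℝ) 1) : mixGap ℓ t D ≤ 1 := by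
  have hh1 : hloss ℓ t D ≤ 1 := hloss_le_one ℓ t D (fun k => (hℓ t k).2)
  rcases eq_or_lt_of_le hD with rfl | h
  · rw [mixGap]
    have := mloss_nonneg_zero ℓ t (fun k => (hℓ t k).1)
    linarith
  · have := mloss_nonneg ℓ t h.ne' (div_pos (logK_pos hK2) h) (fun k => (hℓ t k).1)
    rw [mixGap]
    linarith

lemma ahDelta_nonneg (hK2 : 2 ≤ K) (t : ℕ) : 0 ≤ ahDelta ℓ t := by
  induction t with
  | zero => simp [ahDelta]
  | succ t ih =>
    have := mixGap_nonneg ℓ hK2 t ih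
    rw [ahDelta]
    linarith

/-- The key per-round inequality: `δ·(2 - 2η/3) ≤ η·v`. -/
lemma mixGap_key (hK2 : 2 ≤ K) (hℓ : ∀ t k, ℓ t k ∈ Set.Icc (0:ℝ) 1) (t : ℕ) {D : ℝ}
    (hD : 0 < D) (hη3 : Real.log K / D < 3) :
    mixGap ℓ t D * (2 - 2 * (Real.log K / D) / 3) ≤ (Real.log K / D) * vvar ℓ t D := by
  haveI := finK_nonempty (K := K)
  set η := Real.log K / D with hηdef
  have hη : 0 < η := div_pos (logK_pos hK2) hD
  set d : ℝ := 2 - 2 * η / 3 with hd_def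
  have hd : 0 < d := by rw [hd_def]; linarith
  set w := wts ℓ t D with hw
  set h := hloss ℓ t D with hh
  set v := vvar ℓ t D with hv
  have hh0 : 0 ≤ h := hloss_nonneg ℓ t D (fun k => (hℓ t k).1)
  have hh1 : h ≤ 1 := hloss_le_one ℓ t D (fun k => (hℓ t k).2)
  have hwn : ∀ k, 0 ≤ w k := wts_nonneg ℓ t D
  have hsw : ∑ k, w k = 1 := wts_sum ℓ t D
  have hsum_wl : ∑ k, w k * ℓ t k = h := rfl
  have hvdef : v = ∑ k, w k * (ℓ t k - h)^2 := rfl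
  have hS'pos : (0:ℝ) < ∑ k, w k * Real.exp (-η * (ℓ t k - h)) :=
    Finset.sum_pos (fun k _ => mul_pos (wts_pos ℓ t hD.ne' k) (Real.exp_pos _))
      Finset.univ_nonempty
  have hSpos : (0:ℝ) < ∑ k, w k * Real.exp (-η * ℓ t k) :=
    Finset.sum_pos (fun k _ => mul_pos (wts_pos ℓ t hD.ne' k) (Real.exp_pos _))
      Finset.univ_nonempty
  -- step A : mixGap = (1/η) * log S'
  have hS'eq : ∑ k, w k * Real.exp (-η * (ℓ t k - h))
      = Real.exp (η * h) * ∑ k, w k * Real.exp (-η * ℓ t k) := by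
    rw [Finset.mul_sum]
    refine Finset.sum_congr rfl fun k _ => ?_
    rw [show -η * (ℓ t k - h) = η * h + -η * ℓ t k by ring, Real.exp_add]
    ring
  have stepA : mixGap ℓ t D = (1/η) * Real.log (∑ k, w k * Real.exp (-η * (ℓ t k - h))) := by
    rw [mixGap, mloss_eq ℓ t hD.ne', ← hηdef, ← hw, ← hh, hS'eq,
      Real.log_mul (Real.exp_pos _).ne' hSpos.ne', Real.log_exp]
    field_simp
    ring
  -- step B : S' ≤ 1 + η²v/d
  have hyk : ∀ k, -η * (ℓ t k - h) ≤ η := by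
    intro k
    have h1 := (hℓ t k).1
    nlinarith
  have e1 : ∑ k, w k * (-η * (ℓ t k - h)) = 0 := by
    have expand : ∀ k, w k * (-η * (ℓ t k - h)) = -η * (w k * ℓ t k) + (η * h) * w k := by
      intro k; ring
    rw [Finset.sum_congr rfl fun k _ => expand k, Finset.sum_add_distrib,
      ← Finset.mul_sum, ← Finset.mul_sum, hsum_wl, hsw]
    ring
  have e2 : ∑ k, w k * (-η * (ℓ t k - h))^2 = η^2 * v := by
    have expand : ∀ k, w k * (-η * (ℓ t k - h))^2 = η^2 * (w k * (ℓ t k - h)^2) := by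
      intro k; ring
    rw [Finset.sum_congr rfl fun k _ => expand k, ← Finset.mul_sum, ← hvdef]
  have stepB : ∑ k, w k * Real.exp (-η * (ℓ t k - h)) ≤ 1 + η^2 * v / d := by
    have hterm : ∀ k, w k * Real.exp (-η * (ℓ t k - h))
        ≤ w k * (1 + (-η * (ℓ t k - h)) + (-η * (ℓ t k - h))^2 / d) := by
      intro k
      refine mul_le_mul_of_nonneg_left ?_ (hwn k)
      rw [hd_def]
      exact exp_le_quad hη.le hη3 (hyk k)
    calc ∑ k, w k * Real.exp (-η * (ℓ t k - h))
        ≤ ∑ k, w k * (1 + (-η * (ℓ t k - h)) + (-η * (ℓ t k - h))^2 / d) :=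
          Finset.sum_le_sum fun k _ => hterm k
      _ = ∑ k, (w k + w k * (-η * (ℓ t k - h)) + (w k * (-η * (ℓ t k - h))^2) / d) :=
          Finset.sum_congr rfl fun k _ => by ring
      _ = (∑ k, w k) + (∑ k, w k * (-η * (ℓ t k - h)))
            + (∑ k, w k * (-η * (ℓ t k - h))^2) / d := by
          rw [Finset.sum_add_distrib, Finset.sum_add_distrib, ← Finset.sum_div]
      _ = 1 + η^2 * v / d := by rw [e1, e2, hsw]; ring
  -- step C : log S' ≤ η²v/d
  have stepC : Real.log (∑ k, w k * Real.exp (-η * (ℓ t k - h))) ≤ η^2 * v / d := by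
    have := Real.log_le_sub_one_of_pos hS'pos
    linarith
  -- step D : conclude
  have hfin : mixGap ℓ t D ≤ η * v / d := by
    rw [stepA]
    have h1 := mul_le_mul_of_nonneg_left stepC (le_of_lt (show (0:ℝ) < 1/η by positivity))
    have h2 : (1/η) * (η^2 * v / d) = η * v / d := by field_simp
    linarith
  have hres := mul_le_mul_of_nonneg_right hfin hd.le
  rw [div_mul_cancel₀ _ hd.ne'] at hres
  exact hres

end Gap
section Final
open Finset
variable {K : ℕ} [NeZero K] (ℓ : ℕ → Fin K → ℝ)

/-- Per-round increment of `Δ²`. -/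
lemma step_bound (hK2 : 2 ≤ K) (hℓ : ∀ t k, ℓ t k ∈ Set.Icc (0:ℝ) 1) (t : ℕ) :
    (ahDelta ℓ (t+1))^2 - (ahDelta ℓ t)^2 ≤ vvar ℓ t (ahDelta ℓ t) * Real.log K
      + (1 + (2/3) * Real.log K) * mixGap ℓ t (ahDelta ℓ t) := by
  set Δ := ahDelta ℓ t with hΔ
  have hΔ0 : 0 ≤ Δ := ahDelta_nonneg ℓ hK2 t
  set δ := mixGap ℓ t Δ with hδ
  have hδ0 : 0 ≤ δ := mixGap_nonneg ℓ hK2 t hΔ0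
  have hδ1 : δ ≤ 1 := mixGap_le_one ℓ hK2 t hΔ0 hℓ
  have hL : 0 < Real.log K := logK_pos hK2
  have hv : 0 ≤ vvar ℓ t Δ := vvar_nonneg ℓ t Δ
  have hsucc : ahDelta ℓ (t+1) = Δ + δ := rfl
  rw [hsucc]
  have key : 2 * δ * Δ ≤ vvar ℓ t Δ * Real.log K + (2/3) * Real.log K * δ := by
    rcases eq_or_lt_of_le hΔ0 with h0 | hpos
    · rw [← h0]
      have hv0 : 0 ≤ vvar ℓ t 0 := vvar_nonneg ℓ t 0
      nlinarith [mul_nonneg hv0 hL.le, mul_nonneg (mul_nonneg (by norm_num : (0:ℝ) ≤ 2/3) hL.le) hδ0]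
    · set η := Real.log K / Δ with hη
      have hηpos : 0 < η := div_pos hL hpos
      have hηΔ : η * Δ = Real.log K := by rw [hη]; field_simp
      rcases lt_or_ge η 3 with h3 | h3
      · have hkey := mixGap_key ℓ hK2 hℓ t hpos (hη ▸ h3)
        rw [← hη, ← hδ] at hkey
        -- hkey : δ * (2 - 2η/3) ≤ η * v
        have := mul_le_mul_of_nonneg_right hkey (le_of_lt hpos)
        -- δ(2 - 2η/3)Δ ≤ ηvΔ = v logK
        nlinarith [this, hηΔ, hδ0, hpos.le]
      · -- η ≥ 3 : Δ ≤ logK/3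
        have hΔle : Δ ≤ Real.log K / 3 := by
          rw [le_div_iff₀ (by norm_num : (0:ℝ) < 3)]
          nlinarith [hηΔ, hpos]
        nlinarith
  nlinarith [key]

lemma delta_sq (hK2 : 2 ≤ K) (hℓ : ∀ t k, ℓ t k ∈ Set.Icc (0:ℝ) 1) (T : ℕ) :
    (ahDelta ℓ T)^2 ≤ (∑ t ∈ Finset.range T, vvar ℓ t (ahDelta ℓ t)) * Real.log K
      + (1 + (2/3) * Real.log K) * ahDelta ℓ T := by
  induction T with
  | zero => simp [ahDelta]
  | succ T ih =>
    have hstep := step_bound ℓ hK2 hℓ T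
    have hsucc : ahDelta ℓ (T+1) = ahDelta ℓ T + mixGap ℓ T (ahDelta ℓ T) := rfl
    rw [Finset.sum_range_succ, hsucc]
    rw [hsucc] at hstep
    nlinarith [hstep, ih]

lemma hsum_eq (T : ℕ) :
    ∑ t ∈ Finset.range T, hloss ℓ t (ahDelta ℓ t)
      = (∑ t ∈ Finset.range T, mloss ℓ t (ahDelta ℓ t)) + ahDelta ℓ T := by
  induction T with
  | zero => simp [ahDelta]
  | succ T ih =>
    rw [Finset.sum_range_succ, Finset.sum_range_succ, ih,
      show ahDelta ℓ (T+1) = ahDelta ℓ T + mixGap ℓ T (ahDelta ℓ T) from rfl, mixGap]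
    ring

lemma msum_le (hK2 : 2 ≤ K) (hℓ : ∀ t k, ℓ t k ∈ Set.Icc (0:ℝ) 1) (T : ℕ) :
    (∑ t ∈ Finset.range T, mloss ℓ t (ahDelta ℓ t)) ≤
      if ahDelta ℓ T = 0 then bestLoss (cumLoss ℓ T)
      else Mconst ℓ (Real.log K / ahDelta ℓ T) T := by
  have hL : 0 < Real.log K := logK_pos hK2
  induction T with
  | zero =>
    simp only [Finset.sum_range_zero, ahDelta, if_pos rfl, bestLoss_cumLoss_zero ℓ]
    exact le_refl 0
  | succ T ih =>
    have hΔ0 : 0 ≤ ahDelta ℓ T := ahDelta_nonneg ℓ hK2 T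
    have hδ0 : 0 ≤ mixGap ℓ T (ahDelta ℓ T) := mixGap_nonneg ℓ hK2 T hΔ0
    have hmono : ahDelta ℓ T ≤ ahDelta ℓ (T+1) := by
      rw [show ahDelta ℓ (T+1) = ahDelta ℓ T + mixGap ℓ T (ahDelta ℓ T) from rfl]
      linarith
    rw [Finset.sum_range_succ]
    by_cases hT1 : ahDelta ℓ (T+1) = 0
    · -- then ahDelta T = 0 as well
      have hT : ahDelta ℓ T = 0 := le_antisymm (hT1 ▸ hmono) hΔ0
      rw [if_pos hT1]
      rw [if_pos hT] at ih
      rw [hT, mloss, if_pos rfl]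
      linarith
    · rw [if_neg hT1]
      have hpos1 : 0 < ahDelta ℓ (T+1) :=
        lt_of_le_of_ne (ahDelta_nonneg ℓ hK2 (T+1)) (Ne.symm hT1)
      have hη1 : 0 < Real.log K / ahDelta ℓ (T+1) := div_pos hL hpos1
      by_cases hT0 : ahDelta ℓ T = 0
      · rw [if_pos hT0] at ih
        rw [hT0, mloss, if_pos rfl]
        have := Mconst_ge_best ℓ (T+1) hη1
        linarith
      · rw [if_neg hT0] at ih
        have hpos0 : 0 < ahDelta ℓ T := lt_of_le_of_ne hΔ0 (Ne.symm hT0)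
        rw [mloss, if_neg hT0]
        have hmonoM : Mconst ℓ (Real.log K / ahDelta ℓ T) (T+1)
            ≤ Mconst ℓ (Real.log K / ahDelta ℓ (T+1)) (T+1) :=
          Mconst_mono ℓ (T+1) hη1 (div_le_div_of_nonneg_left hL.le hpos0 hmono)
        linarith

lemma regret_le_two_delta (hK2 : 2 ≤ K) (hℓ : ∀ t k, ℓ t k ∈ Set.Icc (0:ℝ) 1) (T : ℕ) :
    (∑ t ∈ Finset.range T, hloss ℓ t (ahDelta ℓ t)) - bestLoss (cumLoss ℓ T)
      ≤ 2 * ahDelta ℓ T := by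
  have hL : 0 < Real.log K := logK_pos hK2
  have h1 := msum_le ℓ hK2 hℓ T
  have h2 := hsum_eq ℓ T
  by_cases hT : ahDelta ℓ T = 0
  · rw [if_pos hT] at h1
    rw [h2, hT]
    linarith
  · rw [if_neg hT] at h1
    have hpos : 0 < ahDelta ℓ T := lt_of_le_of_ne (ahDelta_nonneg ℓ hK2 T) (Ne.symm hT)
    have hη : 0 < Real.log K / ahDelta ℓ T := div_pos hL hpos
    have h3 := Mconst_le_best_add ℓ T hη
    have h4 : Real.log K / (Real.log K / ahDelta ℓ T) = ahDelta ℓ T := by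
      field_simp
    rw [h4] at h3
    rw [h2]
    linarith

lemma quad_root_bound {x a b : ℝ} (ha : 0 ≤ a) (hb : 0 ≤ b) (hx : 0 ≤ x)
    (h : x^2 ≤ a + b * x) : x ≤ Real.sqrt a + b := by
  by_contra hcon
  push_neg at hcon
  have hs := Real.sq_sqrt ha
  have hs0 := Real.sqrt_nonneg a
  nlinarith [hcon, hs, hs0]

end Final
open Finset in
/-- AdaHedge variance regret bound: `R_T ≤ 2·√(V_T·ln K) + (4/3)·ln K + 2`. -/
theorem adahedge_variance_regret_bound (K : ℕ) [NeZero K] (T : ℕ)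
    (ℓ : ℕ → Fin K → ℝ) (hℓ : ∀ t k, ℓ t k ∈ Set.Icc (0 : ℝ) 1) :
    (∑ t ∈ Finset.range T, hloss ℓ t (ahDelta ℓ t)) - bestLoss (cumLoss ℓ T) ≤
      2 * Real.sqrt ((∑ t ∈ Finset.range T, vvar ℓ t (ahDelta ℓ t)) * Real.log K)
        + (4/3) * Real.log K + 2 := by
  rcases lt_or_ge K 2 with hK | hK
  · -- K = 1 : trivial, regret is 0
    have hK1 : K = 1 := by have := Nat.pos_of_ne_zero (NeZero.ne K); omega
    subst hK1
    have hbest : bestLoss (cumLoss ℓ T) = cumLoss ℓ T 0 := by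
      obtain ⟨k, hk⟩ := exists_best (cumLoss ℓ T)
      rw [← hk, Subsingleton.elim (0 : Fin 1) k]
    have hw : ∀ t D, hloss ℓ t D = ℓ t 0 := by
      intro t D
      rw [hloss, Fin.sum_univ_one]
      by_cases hD : D = 0
      · subst hD
        have hmem : (0 : Fin 1) ∈ leaders (cumLoss ℓ t) := by
          obtain ⟨k, hk⟩ := leaders_nonempty (cumLoss ℓ t)
          rwa [Subsingleton.elim (0 : Fin 1) k]
        have hcard : (leaders (cumLoss ℓ t)).card = 1 := by
          refine le_antisymm ?_ (Finset.card_pos.2 ⟨0, hmem⟩)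
          calc (leaders (cumLoss ℓ t)).card
              ≤ (Finset.univ : Finset (Fin 1)).card := Finset.card_le_univ _
            _ = 1 := by simp
        rw [wts, if_pos rfl, if_pos hmem, hcard]
        norm_num
      · rw [wts, if_neg hD, Fin.sum_univ_one, div_self (Real.exp_pos _).ne', one_mul]
    have hsum : ∑ t ∈ Finset.range T, hloss ℓ t (ahDelta ℓ t) = cumLoss ℓ T 0 := by
      rw [cumLoss]
      exact Finset.sum_congr rfl fun t _ => hw t _
    rw [hsum, hbest, sub_self]
    have hlog1 : Real.log ((1:ℕ):ℝ) = 0 := by norm_num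
    rw [hlog1]
    have hs := Real.sqrt_nonneg ((∑ t ∈ Finset.range T, vvar ℓ t (ahDelta ℓ t)) * 0)
    linarith
  · -- K ≥ 2
    have hL : 0 < Real.log K := logK_pos (K := K) hK
    set V := ∑ t ∈ Finset.range T, vvar ℓ t (ahDelta ℓ t) with hV
    have hV0 : 0 ≤ V := Finset.sum_nonneg fun t _ => vvar_nonneg ℓ t _
    have ha : 0 ≤ V * Real.log K := mul_nonneg hV0 hL.le
    have hb : 0 ≤ 1 + (2/3) * Real.log K := by linarith
    have hΔ := quad_root_bound ha hb (ahDelta_nonneg ℓ hK T) (delta_sq ℓ hK hℓ T)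
    have hreg := regret_le_two_delta ℓ hK hℓ T
    have hs := Real.sqrt_nonneg (V * Real.log K)
    linarith

end
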